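/- Let M be a 3-connected matroid and let S be a subset of E(M) with r(S) = 2 and |S| ≥ 4. Then for every s ∈ S, the matroid M∖s is 3-connected. -/

import Mathlib

open Set

namespace PaperDefs

variable {α : Type*}

/-- The rank of a set `X` in a matroid `M`, as an extended natural number:
the supremum of the cardinalities of independent subsets of `X`. -/
noncomputable def eRk (M : Matroid α) (X : Set α) : ℕ∞ :=
  ⨆ I ∈ {I | M.Indep I ∧ I ⊆ X}, I.encard

/-- Deletion of a set of elements from a matroid. -/
def del (M : Matroid α) (D : Set α) : Matroid α := M.restrict (M.E \ D)

/-- Contraction of a set of elements in a matroid. -/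
def con (M : Matroid α) (C : Set α) : Matroid α := (del M✶ C)✶

/-- A circuit: a minimal dependent set. -/
def Circuit (M : Matroid α) (C : Set α) : Prop :=
  M.Dep C ∧ ∀ D, D ⊂ C → M.Indep D

/-- A `k`-separation of `M`: a partition `(X, M.E \ X)` with connectivity
`λ(X) = r(X) + r(E−X) − r(M)` at most `k − 1`, and both sides of size at least `k`. -/
def kSeparation (M : Matroid α) (X : Set α) (k : ℕ) : Prop :=
  X ⊆ M.E ∧ eRk M X + eRk M (M.E \ X) ≤ eRk M M.E + ((k - 1 : ℕ) : ℕ∞) ∧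
    (k : ℕ∞) ≤ X.encard ∧ (k : ℕ∞) ≤ (M.E \ X).encard

/-- `M` is `n`-connected if it has no `k`-separations for `0 < k < n`. -/
def NConnected (M : Matroid α) (n : ℕ) : Prop :=
  ∀ k : ℕ, 0 < k → k < n → ∀ X : Set α, ¬ kSeparation M X k

/-- `X` is 3-separating in `M`: `λ_M(X) ≤ 2`. -/
def ThreeSeparating (M : Matroid α) (X : Set α) : Prop :=
  eRk M X + eRk M (M.E \ X) ≤ eRk M M.E + 2

/-- `X` is exactly 3-separating in `M`: `λ_M(X) = 2`. -/
def ExactlyThreeSeparating (M : Matroid α) (X : Set α) : Prop :=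
  eRk M X + eRk M (M.E \ X) = eRk M M.E + 2

/-- `N` is a simplification of `M`: `N` is obtained from `M` by deleting a set of
elements, `N` has no loops or parallel pairs (no circuits of size at most two), and
every element of `M` is in the closure of the ground set of `N`. -/
def IsSimplificationOf (N M : Matroid α) : Prop :=
  (∃ D ⊆ M.E, N = del M D) ∧ (∀ C, Circuit N C → 3 ≤ C.encard) ∧
    M.closure N.E = M.E

/-- `N` is a cosimplification of `M`: `N✶` is a simplification of `M✶`. -/
def IsCosimplificationOf (N M : Matroid α) : Prop :=
  IsSimplificationOf N✶ M✶

/-- `S` is a series class of `M`: a maximal nonempty set any two distinct elements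
of which form a series pair (a two-element cocircuit). -/
def IsSeriesClass (M : Matroid α) (S : Set α) : Prop :=
  S.Nonempty ∧ S ⊆ M.E ∧ (∀ a ∈ S, ∀ b ∈ S, a ≠ b → Circuit M✶ {a, b}) ∧
    (∀ a ∈ S, ∀ f, Circuit M✶ {a, f} → a ≠ f → f ∈ S)

/-- The full closure of `X` in `M`: the intersection of all sets containing `X ∩ M.E`
that are closed in both `M` and `M✶`. -/
def fullClosure (M : Matroid α) (X : Set α) : Set α :=
  ⋂₀ {F | X ∩ M.E ⊆ F ∧ M.closure F = F ∧ M✶.closure F = F}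

end PaperDefs

open PaperDefs

/-!
Fix a separation `(X, Z)` of `M ∖ s` of order `k < 3`. In a 3-connected matroid with at least
four elements every pair of elements is independent, so any two elements of `S - s` span the
rank-2 set `S`, and in particular span `s`. Since `|S - s| ≥ 3`, one side of the separation
contains two of them and hence spans `s`; adding `s` to that side changes neither its rank nor
the rank of the whole matroid, so it yields a `k`-separation of `M`.
-/

namespace PaperDefs

variable {α : Type*} {M : Matroid α} {T X : Set α} {a b s : α} {k n : ℕ}

@[simp]
lemma eRk_eq_eRk (M : Matroid α) (X : Set α) : eRk M X = M.eRk X := by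
  refine le_antisymm (iSup₂_le fun I hI ↦ hI.1.encard_le_eRk_of_subset hI.2) ?_
  obtain ⟨I, hI⟩ := M.exists_isBasis' X
  rw [← hI.encard_eq_eRk]
  exact le_iSup₂_of_le (f := fun I (_ : I ∈ {I | M.Indep I ∧ I ⊆ X}) ↦ I.encard) I
    ⟨hI.indep, hI.subset⟩ le_rfl

lemma kSeparation.compl (h : kSeparation M X k) : kSeparation M (M.E \ X) k := by
  obtain ⟨hXE, hr, hX, hXc⟩ := h
  refine ⟨sdiff_subset, ?_, hXc, ?_⟩ <;> rw [sdiff_sdiff_cancel_left hXE]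
  · rwa [add_comm]
  · exact hX

lemma kSeparation.insert_of_del (h : kSeparation (del M {s}) X k) (hs : s ∈ M.closure X) :
    kSeparation M (insert s X) k := by
  obtain ⟨hXE, hr, hX, hXc⟩ := h
  have hXE' : X ⊆ M.E \ {s} := hXE
  have hsE : s ∈ M.E := M.closure_subset_ground X hs
  have hcompl : M.E \ insert s X = (M.E \ {s}) \ X := by
    rw [sdiff_sdiff, singleton_union]
  have hrX : M.eRk (insert s X) = M.eRk X := by
    rw [← Matroid.eRk_closure_eq, Matroid.closure_insert_eq_of_mem_closure hs,
      Matroid.eRk_closure_eq]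
  have hrE : M.eRk (M.E \ {s}) = M.eRk M.E := by
    rw [← Matroid.eRk_closure_eq,
      ← Matroid.closure_insert_eq_of_mem_closure (M.closure_mono hXE' hs),
      insert_sdiff_singleton, insert_eq_of_mem hsE, Matroid.eRk_closure_eq]
  refine ⟨insert_subset hsE (hXE'.trans sdiff_subset), ?_,
    hX.trans (encard_mono (subset_insert _ _)), ?_⟩
  · simp only [eRk_eq_eRk, del, Matroid.restrict_ground_eq,
      Matroid.restrict_eRk_eq _ hXE', Matroid.restrict_eRk_eq _ sdiff_subset,
      Matroid.restrict_eRk_eq _ subset_rfl] at hr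
    rwa [eRk_eq_eRk, eRk_eq_eRk, eRk_eq_eRk, hcompl, hrX, ← hrE]
  · rwa [hcompl]

lemma NConnected.del_singleton (hM : NConnected M n) (hTE : T ⊆ M.E \ {s}) (hT : 3 ≤ T.encard)
    (hspan : ∀ a ∈ T, ∀ b ∈ T, a ≠ b → s ∈ M.closure {a, b}) :
    NConnected (del M {s}) n := by
  intro k hk0 hkn X hX
  have hside : ∀ Y, kSeparation (del M {s}) Y k → (Y ∩ T).Nontrivial → False := by
    rintro Y hY ⟨a, ha, b, hb, hab⟩
    refine hM k hk0 hkn _ (hY.insert_of_del (M.closure_mono ?_ (hspan a ha.2 b hb.2 hab)))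
    exact insert_subset ha.1 (singleton_subset_iff.2 hb.1)
  have hcover : T ⊆ (X ∩ T) ∪ ((M.E \ {s}) \ X ∩ T) := fun x hx ↦ by
    by_cases hxX : x ∈ X
    · exact .inl ⟨hxX, hx⟩
    · exact .inr ⟨⟨hTE hx, hxX⟩, hx⟩
  have hX1 : (X ∩ T).encard ≤ 1 :=
    encard_le_one_iff_subsingleton.2 (not_nontrivial_iff.1 (hside X hX))
  have hZ1 : ((M.E \ {s}) \ X ∩ T).encard ≤ 1 :=
    encard_le_one_iff_subsingleton.2 (not_nontrivial_iff.1 (hside _ hX.compl))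
  have h3le2 : (3 : ℕ∞) ≤ 1 + 1 :=
    hT.trans ((encard_mono hcover).trans ((encard_union_le _ _).trans (add_le_add hX1 hZ1)))
  norm_num at h3le2

lemma NConnected.indep_pair (hM : NConnected M 3) (hE : 4 ≤ M.E.encard) (ha : a ∈ M.E)
    (hb : b ∈ M.E) (hab : a ≠ b) : M.Indep {a, b} := by
  have hpair : ({a, b} : Set α).encard = 2 := encard_pair hab
  have hsub : ({a, b} : Set α) ⊆ M.E := insert_subset ha (singleton_subset_iff.2 hb)
  by_contra hdep
  have hrk : M.eRk {a, b} ≤ 1 := by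
    have := M.eRk_lt_encard_of_dep_of_finite (toFinite _) ⟨hdep, hsub⟩
    rw [hpair] at this
    exact Order.le_of_lt_succ this
  have hcompl : 2 ≤ (M.E \ {a, b}).encard := by
    rw [← encard_sdiff_add_encard_of_subset hsub, hpair] at hE
    generalize (M.E \ {a, b}).encard = c at hE ⊢
    enat_to_nat
    omega
  refine hM 2 two_pos (by norm_num) {a, b} ⟨hsub, ?_, hpair.ge, hcompl⟩
  simp only [eRk_eq_eRk]
  calc M.eRk {a, b} + M.eRk (M.E \ {a, b}) ≤ 1 + M.eRk M.E :=
        add_le_add hrk (M.eRk_mono sdiff_subset)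
    _ = M.eRk M.E + ((2 - 1 : ℕ) : ℕ∞) := add_comm _ _

end PaperDefs

/-- If `M` is 3-connected and `S ⊆ M.E` has rank 2 and at least four
elements, then `M ∖ s` is 3-connected for every `s ∈ S`. -/
theorem statement_7 {α : Type*} (M : Matroid α) (S : Set α)
    (h3 : NConnected M 3) (hS : S ⊆ M.E) (hr : eRk M S = 2)
    (hcard : 4 ≤ S.encard) (s : α) (hs : s ∈ S) :
    NConnected (del M {s}) 3 := by
  have hE : 4 ≤ M.E.encard := hcard.trans (encard_mono hS)
  have hS' : 3 ≤ (S \ {s}).encard := by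
    rw [← encard_sdiff_singleton_add_one hs] at hcard
    generalize (S \ {s}).encard = c at hcard ⊢
    enat_to_nat
    omega
  refine h3.del_singleton (sdiff_subset_sdiff_left hS) hS' fun a ha b hb hab ↦ ?_
  have hI := h3.indep_pair hE (hS ha.1) (hS hb.1) hab
  have hbasis : M.IsBasis {a, b} S :=
    hI.isBasis_of_eRk_ge (toFinite _) (insert_subset ha.1 (singleton_subset_iff.2 hb.1))
      (by rw [← eRk_eq_eRk, hr, hI.eRk_eq_encard, encard_pair hab]) hS
  exact hbasis.subset_closure hs
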